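/- For a totally bounded pseudometric d on a set X and for each n ∈ ℕ, the pseudometric hm(d)(f,g) = ∫₀¹ d(f(t),g(t)) dt is totally bounded on HMₙ(X), the set of step functions [0,1) → X with at most n pieces. -/

import Mathlib

open MeasureTheory

def IsPseudometric {X : Type*} (d : X → X → ℝ) : Prop :=
  (∀ x, d x x = 0) ∧ (∀ x y, 0 ≤ d x y) ∧ (∀ x y, d x y = d y x) ∧
    (∀ x y z, d x z ≤ d x y + d y z)

/-- Step functions on `[0,1)` with at most `n` pieces. -/
def IsStepN {X : Type*} (n : ℕ) (f : ℝ → X) : Prop :=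
  ∃ a : ℕ → ℝ, a 0 = 0 ∧ a n = 1 ∧ (∀ i < n, a i ≤ a (i + 1)) ∧
    ∀ i < n, ∀ t ∈ Set.Ico (a i) (a (i + 1)), f t = f (a i)

noncomputable def hm {X : Type*} (d : X → X → ℝ) (f g : ℝ → X) : ℝ :=
  ∫ t in Set.Ico (0 : ℝ) 1, d (f t) (g t)

/-!
Round the breakpoints of a step function down to the grid `{0, 1/m, …, 1}` and replace its
values by points of an `ε / 2`-net of `X`. The new values are within `ε / 2` of the old ones
except between an original breakpoint and its rounding, a set of measure at most `n / m`, on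
which `d` is still bounded because a totally bounded pseudometric is bounded.
-/

open Set
open scoped Finset

section

variable {X : Type*}

/-- For monotone `b`, the index of the piece `[b i, b (i + 1))` containing `t`. Counting
breakpoints, rather than taking the last one below `t`, makes the index depend on `b` only
through the comparisons `b i ≤ t`. -/
noncomputable def stepIndex (n : ℕ) (b : ℕ → ℝ) (t : ℝ) : ℕ := #{i ∈ Finset.Ioo 0 n | b i ≤ t}

noncomputable def stepFun (n : ℕ) (b : ℕ → ℝ) (c : ℕ → X) (t : ℝ) : X := c (stepIndex n b t)

lemma monotoneOn_Iic_of_le_succ {β : Type*} [Preorder β] {a : ℕ → β} {n : ℕ}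
    (h : ∀ i < n, a i ≤ a (i + 1)) :
    MonotoneOn a (Iic n) :=
  monotoneOn_of_le_succ ordConnected_Iic fun i _ _ hi => by
    simp only [Order.succ_eq_add_one, mem_Iic] at hi ⊢
    exact h i hi

lemma mem_Icc_of_le_succ {β : Type*} [Preorder β] {a : ℕ → β} {n : ℕ}
    (ha : ∀ i < n, a i ≤ a (i + 1)) {i : ℕ} (hi : i ≤ n) : a i ∈ Icc (a 0) (a n) :=
  have hmono := monotoneOn_Iic_of_le_succ ha
  ⟨hmono (mem_Iic.2 (Nat.zero_le n)) (mem_Iic.2 hi) (Nat.zero_le i),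
    hmono (mem_Iic.2 hi) (mem_Iic.2 le_rfl) hi⟩

lemma exists_mem_Ico_of_mem_Ico {α : Type*} [LinearOrder α] (a : ℕ → α) {n : ℕ} {t : α}
    (ht : t ∈ Ico (a 0) (a n)) : ∃ i < n, t ∈ Ico (a i) (a (i + 1)) := by
  induction n with
  | zero => exact absurd ht.2 (not_lt.2 ht.1)
  | succ n ih =>
    by_cases htn : t < a n
    · obtain ⟨i, hi, hti⟩ := ih ⟨ht.1, htn⟩
      exact ⟨i, hi.trans n.lt_succ_self, hti⟩
    · exact ⟨n, n.lt_succ_self, not_lt.1 htn, ht.2⟩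

lemma stepIndex_lt {n : ℕ} (hn : 0 < n) (b : ℕ → ℝ) (t : ℝ) : stepIndex n b t < n :=
  (Finset.card_filter_le _ _).trans_lt (by rw [Nat.card_Ioo]; omega)

lemma stepIndex_eq_of_mem_Ico {n i : ℕ} {b : ℕ → ℝ} {t : ℝ} (hb : ∀ j < n, b j ≤ b (j + 1))
    (hi : i < n) (ht : t ∈ Ico (b i) (b (i + 1))) : stepIndex n b t = i := by
  have hmono := monotoneOn_Iic_of_le_succ hb
  have hfilter : {j ∈ Finset.Ioo 0 n | b j ≤ t} = Finset.Ioc 0 i := by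
    ext j
    simp only [Finset.mem_filter, Finset.mem_Ioo, Finset.mem_Ioc]
    constructor
    · rintro ⟨⟨hj0, hjn⟩, hjt⟩
      refine ⟨hj0, not_lt.1 fun hij => ?_⟩
      have : b (i + 1) ≤ b j := hmono (mem_Iic.2 (by omega)) (mem_Iic.2 hjn.le) hij
      linarith [ht.2]
    · rintro ⟨hj0, hji⟩
      exact ⟨⟨hj0, by omega⟩,
        (hmono (mem_Iic.2 (by omega)) (mem_Iic.2 hi.le) hji).trans ht.1⟩
  rw [stepIndex, hfilter, Nat.card_Ioc, Nat.sub_zero]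

lemma stepIndex_eq_of_forall_notMem_uIcc {n : ℕ} {a b : ℕ → ℝ} {t : ℝ}
    (ht : ∀ i ∈ Finset.Ioo 0 n, t ∉ uIcc (a i) (b i)) :
    stepIndex n a t = stepIndex n b t := by
  unfold stepIndex
  congr 1
  refine Finset.filter_congr fun i hi => ?_
  have := ht i hi
  rw [mem_uIcc] at this
  constructor <;> intro h <;> by_contra! h'
  exacts [this (.inl ⟨h, h'.le⟩), this (.inr ⟨h, h'.le⟩)]

lemma stepFun_congr {n : ℕ} (hn : 0 < n) {b b' : ℕ → ℝ} {c c' : ℕ → X}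
    (hb : ∀ i < n, b i = b' i) (hc : ∀ i < n, c i = c' i) :
    stepFun n b c = stepFun n b' c' := by
  funext t
  have : stepIndex n b t = stepIndex n b' t := by
    unfold stepIndex
    congr 1
    exact Finset.filter_congr fun i hi => by rw [hb i (Finset.mem_Ioo.1 hi).2]
  rw [stepFun, stepFun, ← this]
  exact hc _ (stepIndex_lt hn b t)

lemma isStepN_stepFun {n : ℕ} {b : ℕ → ℝ} (c : ℕ → X) (h0 : b 0 = 0) (h1 : b n = 1)
    (hb : ∀ i < n, b i ≤ b (i + 1)) : IsStepN n (stepFun n b c) :=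
  ⟨b, h0, h1, hb, fun i hi t ht => by
    simp only [stepFun, stepIndex_eq_of_mem_Ico hb hi ht,
      stepIndex_eq_of_mem_Ico hb hi ⟨le_rfl, ht.1.trans_lt ht.2⟩]⟩

lemma eqOn_stepFun {n : ℕ} {a : ℕ → ℝ} {f : ℝ → X} (h0 : a 0 = 0) (h1 : a n = 1)
    (ha : ∀ i < n, a i ≤ a (i + 1))
    (hf : ∀ i < n, ∀ t ∈ Ico (a i) (a (i + 1)), f t = f (a i)) :
    EqOn f (stepFun n a (f ∘ a)) (Ico 0 1) := by
  intro t ht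
  rw [← h0, ← h1] at ht
  obtain ⟨i, hi, hti⟩ := exists_mem_Ico_of_mem_Ico a ht
  rw [stepFun, stepIndex_eq_of_mem_Ico ha hi hti, hf i hi t hti, Function.comp_apply]

lemma abs_sub_natFloor_mul_div_le {x : ℝ} (hx : 0 ≤ x) {m : ℕ} (hm : 0 < m) :
    |x - ⌊m * x⌋₊ / m| ≤ 1 / m := by
  have hm' : (0 : ℝ) < m := by exact_mod_cast hm
  have hlo := Nat.floor_le (mul_nonneg hm'.le hx)
  have hhi := Nat.lt_floor_add_one ((m : ℝ) * x)
  rw [show x - ⌊m * x⌋₊ / m = (m * x - ⌊m * x⌋₊) / m by field_simp,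
    abs_of_nonneg (div_nonneg (by linarith) hm'.le)]
  gcongr
  linarith

lemma sum_abs_sub_natFloor_mul_div_le {a : ℕ → ℝ} {n m : ℕ} (hm : 0 < m)
    (ha : ∀ i ∈ Finset.Ioo 0 n, 0 ≤ a i) :
    ∑ i ∈ Finset.Ioo 0 n, |a i - ⌊m * a i⌋₊ / m| ≤ n / m :=
  calc ∑ i ∈ Finset.Ioo 0 n, |a i - ⌊m * a i⌋₊ / m|
      ≤ #(Finset.Ioo 0 n) • (1 / m : ℝ) :=
        Finset.sum_le_card_nsmul _ _ _ fun i hi => abs_sub_natFloor_mul_div_le (ha i hi) hm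
    _ ≤ n / m := by
        rw [nsmul_eq_mul, Nat.card_Ioo, mul_one_div]
        gcongr
        exact_mod_cast Nat.sub_le _ _

open Classical in
/-- The finitely many step functions with `n` pieces, breakpoints in `{0, 1/m, …, 1}` and values
in `s`; `Fin.ofNat` extends the data to `ℕ`, where only the indices below `n` matter. -/
noncomputable def gridStepFuns (n m : ℕ) [NeZero n] (s : Finset X) : Finset (ℝ → X) :=
  {g ∈ Finset.univ.image fun p : (Fin n → Fin (m + 1)) × (Fin n → s) =>
    stepFun n (fun i => (p.1 (Fin.ofNat n i) : ℝ) / m) (fun i => p.2 (Fin.ofNat n i)) |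
    IsStepN n g}

open Classical in
lemma isStepN_of_mem_gridStepFuns {n m : ℕ} [NeZero n] {s : Finset X} {g : ℝ → X}
    (hg : g ∈ gridStepFuns n m s) : IsStepN n g :=
  (Finset.mem_filter.1 hg).2

open Classical in
lemma stepFun_natFloor_mem_gridStepFuns {n m : ℕ} [NeZero n] (hm : 0 < m) {s : Finset X}
    {a : ℕ → ℝ} {c : ℕ → X} (h0 : a 0 = 0) (h1 : a n = 1) (ha : ∀ i < n, a i ≤ a (i + 1))
    (hc : ∀ i < n, c i ∈ s) :
    stepFun n (fun i => (⌊m * a i⌋₊ : ℝ) / m) c ∈ gridStepFuns n m s := by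
  have hk (i : ℕ) (hi : i < n) : ⌊m * a i⌋₊ < m + 1 := by
    have : a i ≤ 1 := h1 ▸ (mem_Icc_of_le_succ ha hi.le).2
    exact Nat.lt_succ_of_le (Nat.floor_le_of_le (mul_le_of_le_one_right m.cast_nonneg this))
  refine Finset.mem_filter.2 ⟨Finset.mem_image.2 ⟨(fun j => ⟨_, hk j j.2⟩,
    fun j => ⟨c j, hc j j.2⟩), Finset.mem_univ _, ?_⟩, ?_⟩
  · refine stepFun_congr (NeZero.pos n) (fun i hi => ?_) (fun i hi => ?_) <;>
      simp [Nat.mod_eq_of_lt hi]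
  · exact isStepN_stepFun _ (by simp [h0]) (by simp [h1, hm.ne'])
      fun i hi => by gcongr; exact ha i hi

lemma setIntegral_le_of_le_add_indicator {α : Type*} [MeasurableSpace α] {μ : Measure α}
    {s E : Set α} {φ : α → ℝ} {δ M : ℝ} (hs : μ s ≠ ⊤) (hE : MeasurableSet E)
    (hφ0 : ∀ t, 0 ≤ φ t) (hφ : ∀ t, φ t ≤ δ + E.indicator (fun _ => M) t) :
    ∫ t in s, φ t ∂μ ≤ δ * μ.real s + M * (μ.restrict s).real E := by
  have hδ : IntegrableOn (fun _ => δ) s μ := integrableOn_const hs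
  have hM : IntegrableOn (E.indicator fun _ => M) s μ := (integrableOn_const hs).indicator hE
  calc ∫ t in s, φ t ∂μ ≤ ∫ t in s, (δ + E.indicator (fun _ => M) t) ∂μ :=
        integral_mono_of_nonneg (.of_forall hφ0) (hδ.add hM) (.of_forall hφ)
    _ = δ * μ.real s + M * (μ.restrict s).real E := by
        rw [integral_add hδ hM, setIntegral_const, integral_indicator_const _ hE, smul_eq_mul,
          smul_eq_mul, mul_comm, mul_comm _ M]

lemma hm_congr_left {d : X → X → ℝ} {f f' : ℝ → X} (h : EqOn f f' (Ico 0 1)) (g : ℝ → X) :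
    hm d f g = hm d f' g :=
  setIntegral_congr_fun measurableSet_Ico fun t ht => by rw [h ht]

/-- Two step functions with nearby values differ only where their piece indices differ, which
happens only between corresponding breakpoints. -/
lemma hm_stepFun_le {d : X → X → ℝ} {M δ : ℝ} (hd0 : ∀ x y, 0 ≤ d x y)
    (hM : ∀ x y, d x y ≤ M) {n : ℕ} {a b : ℕ → ℝ} {c c' : ℕ → X}
    (hc : ∀ i, d (c i) (c' i) ≤ δ) :
    hm d (stepFun n a c) (stepFun n b c') ≤ δ + M * ∑ i ∈ Finset.Ioo 0 n, |a i - b i| := by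
  set E := ⋃ i ∈ Finset.Ioo 0 n, uIcc (a i) (b i)
  have hM0 : 0 ≤ M := (hd0 (c 0) (c 0)).trans (hM _ _)
  have hδ : 0 ≤ δ := (hd0 _ _).trans (hc 0)
  have hpt : ∀ t, d (stepFun n a c t) (stepFun n b c' t) ≤ δ + E.indicator (fun _ => M) t := by
    intro t
    by_cases htE : t ∈ E
    · rw [indicator_of_mem htE]
      linarith [hM (stepFun n a c t) (stepFun n b c' t)]
    · have hidx : stepIndex n a t = stepIndex n b t :=
        stepIndex_eq_of_forall_notMem_uIcc fun i hi hti => htE (mem_biUnion hi hti)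
      rw [indicator_of_notMem htE, add_zero, stepFun, stepFun, hidx]
      exact hc _
  have hE : (volume.restrict (Ico (0 : ℝ) 1)).real E ≤ ∑ i ∈ Finset.Ioo 0 n, |a i - b i| := by
    refine (measureReal_biUnion_finset_le _ _).trans (Finset.sum_le_sum fun i _ => ?_)
    rw [measureReal_restrict_apply measurableSet_uIcc, abs_sub_comm,
      ← Real.volume_real_interval]
    exact measureReal_mono inter_subset_left (by simp [Real.volume_interval])
  calc hm d (stepFun n a c) (stepFun n b c')
      ≤ δ * volume.real (Ico (0 : ℝ) 1) + M * (volume.restrict (Ico (0 : ℝ) 1)).real E :=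
        setIntegral_le_of_le_add_indicator (by simp)
          (Finset.measurableSet_biUnion _ fun _ _ => measurableSet_uIcc) (fun _ => hd0 _ _) hpt
    _ ≤ δ + M * ∑ i ∈ Finset.Ioo 0 n, |a i - b i| := by
        rw [Real.volume_real_Ico_of_le zero_le_one, sub_zero, mul_one]
        gcongr

lemma IsPseudometric.exists_bound {d : X → X → ℝ} (hd : IsPseudometric d) {s : Finset X}
    {r : ℝ} (hs : ∀ x, ∃ c ∈ s, d x c < r) : ∃ M, 0 ≤ M ∧ ∀ x y, d x y ≤ M := by
  obtain ⟨-, hnonneg, hsymm, htri⟩ := hd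
  refine ⟨max (2 * r + ∑ p ∈ s ×ˢ s, d p.1 p.2) 0, le_max_right _ _, fun x y => ?_⟩
  obtain ⟨cx, hcx, hx⟩ := hs x
  obtain ⟨cy, hcy, hy⟩ := hs y
  have hc : d cx cy ≤ ∑ p ∈ s ×ˢ s, d p.1 p.2 :=
    Finset.single_le_sum (f := fun p : X × X => d p.1 p.2) (fun _ _ => hnonneg _ _)
      (Finset.mem_product.2 ⟨hcx, hcy⟩ : (cx, cy) ∈ s ×ˢ s)
  refine le_max_of_le_left ?_
  linarith [htri x cx y, htri cx cy y, hsymm cy y]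

end

theorem hm_totallyBounded_on_HMn {X : Type*} (d : X → X → ℝ)
    (hd : IsPseudometric d)
    (htb : ∀ ε > (0 : ℝ), ∃ s : Finset X, ∀ x : X, ∃ c ∈ s, d x c < ε)
    (n : ℕ) :
    ∀ ε > (0 : ℝ), ∃ s : Finset (ℝ → X), (∀ f ∈ s, IsStepN n f) ∧
      ∀ f : ℝ → X, IsStepN n f → ∃ g ∈ s, hm d f g < ε := by
  intro ε hε
  rcases n.eq_zero_or_pos with rfl | hn
  · exact ⟨∅, by simp, fun f ⟨a, h0, h1, _⟩ => by simp [h0] at h1⟩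
  have : NeZero n := ⟨hn.ne'⟩
  obtain ⟨M, hM0, hM⟩ := hd.exists_bound (htb 1 one_pos).choose_spec
  obtain ⟨s, hs⟩ := htb (ε / 2) (half_pos hε)
  choose net hnet_mem hnet using hs
  obtain ⟨m, hmε⟩ := exists_nat_gt (2 * M * n / ε)
  have hm_pos : 0 < m := by exact_mod_cast (by positivity : (0 : ℝ) ≤ 2 * M * n / ε).trans_lt hmε
  refine ⟨gridStepFuns n m s, fun g => isStepN_of_mem_gridStepFuns, ?_⟩
  rintro f ⟨a, ha0, ha1, ha, hf⟩
  refine ⟨_, stepFun_natFloor_mem_gridStepFuns hm_pos (c := net ∘ f ∘ a) ha0 ha1 ha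
    fun i _ => hnet_mem _, ?_⟩
  have hMm : M * (n / m) < ε / 2 := by
    rw [mul_div_assoc', div_lt_iff₀ (Nat.cast_pos.2 hm_pos)]
    rw [div_lt_iff₀ hε] at hmε
    linarith
  calc hm d f _ = hm d (stepFun n a (f ∘ a)) _ := hm_congr_left (eqOn_stepFun ha0 ha1 ha hf) _
    _ ≤ ε / 2 + M * ∑ i ∈ Finset.Ioo 0 n, |a i - ⌊m * a i⌋₊ / m| :=
        hm_stepFun_le hd.2.1 hM fun i => (hnet _).le
    _ ≤ ε / 2 + M * (n / m) := by
        gcongr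
        exact sum_abs_sub_natFloor_mul_div_le hm_pos
          fun i hi => ha0 ▸ (mem_Icc_of_le_succ ha (Finset.mem_Ioo.1 hi).2.le).1
    _ < ε := by linarith
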